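/- Let 𝔊 = (G = (V,E), Parity(ℙ), ψ_glive(ℋ)) be a parity game augmented with live groups, with ℙ : V → {0,…,d}. Define the Rabin game 𝒢' = (G' = (V', E'), Rabin(Ω1 ∪ Ω2)) where V' = V ⊎ E (each edge of G becomes a fresh vertex of G'), E' = {(u, e), (e, v) : e = (u,v) ∈ E}, Ω1 = {(src(H), H) : H ∈ ℋ} (edges of G viewed as vertices of G'), and Ω2 = {(P_{2i}, ⋃_{j > 2i} P_j) : 0 ≤ 2i ≤ d} with P_j = {v ∈ V : ℙ(v) = j}. For a play ρ = v1 v2 v3 … in G, let its projection to G' be ρ' = v1 (v1,v2) v2 (v2,v3) v3 …. Then a play ρ in G is winning for Player 0 in the augmented game 𝔊 if and only if its projection ρ' satisfies the Rabin objective Rabin(Ω1 ∪ Ω2). -/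
import Mathlib


universe u

/-- A two-player game graph: finite-intended vertex set `V`, an ownership function
(`owner v = 0` means `v` is a Player-0 vertex, `owner v = 1` a Player-1 vertex),
and an edge relation such that every vertex has at least one outgoing edge. -/
structure GameGraph (V : Type u) where
  owner : V → Fin 2
  E : V → V → Prop
  exists_succ : ∀ v, ∃ w, E v w

variable {V : Type u}

/-- A play of the game graph: an infinite sequence of vertices following edges. -/
def IsPlay (G : GameGraph V) (ρ : ℕ → V) : Prop :=
  ∀ k, G.E (ρ k) (ρ (k + 1))

/-- A (history-dependent) strategy: given the list of previously visited
vertices and the current vertex, it chooses a next vertex. -/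
abbrev Strategy (V : Type u) := List V → V → V

/-- A strategy of Player `i` is valid if at each Player-`i` vertex it chooses
an edge of the game graph. -/
def StratValid (G : GameGraph V) (i : Fin 2) (σ : Strategy V) : Prop :=
  ∀ (h : List V) (v : V), G.owner v = i → G.E v (σ h v)

/-- A positional (memoryless) strategy ignores the history. -/
def Positional (σ : Strategy V) : Prop :=
  ∀ (h h' : List V) (v : V), σ h v = σ h' v

/-- A play is compliant with the strategy `σ` of Player `i` (a `σ`-play) if at
every Player-`i` vertex it moves to the vertex chosen by `σ`. -/
def Compliant (G : GameGraph V) (i : Fin 2) (σ : Strategy V) (ρ : ℕ → V) : Prop :=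
  ∀ k, G.owner (ρ k) = i → ρ (k + 1) = σ (List.ofFn fun j : Fin k => ρ j.val) (ρ k)

/-- `σ` is a winning strategy for Player `i` from `v`, where `W` is the set of
plays that are winning for Player `i`. -/
def WinsFrom (G : GameGraph V) (i : Fin 2) (W : Set (ℕ → V)) (σ : Strategy V) (v : V) : Prop :=
  StratValid G i σ ∧
    ∀ ρ : ℕ → V, IsPlay G ρ → Compliant G i σ ρ → ρ 0 = v → ρ ∈ W

/-- The winning region of Player `i`: the vertices from which Player `i` has a
winning strategy. -/
def WinRegion (G : GameGraph V) (i : Fin 2) (W : Set (ℕ → V)) : Set V :=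
  {v | ∃ σ, WinsFrom G i W σ v}

/-- A vertex occurs infinitely often along a play. -/
def InfOft (ρ : ℕ → V) (v : V) : Prop := ∀ n, ∃ k, n ≤ k ∧ ρ k = v

/-- An edge is taken infinitely often along a play. -/
def EdgeInfOft (ρ : ℕ → V) (e : V × V) : Prop :=
  ∀ n, ∃ k, n ≤ k ∧ ρ k = e.1 ∧ ρ (k + 1) = e.2

/-- Parity objective: the maximal priority occurring infinitely often is even. -/
def ParityWin (P : V → ℕ) (ρ : ℕ → V) : Prop :=
  ∃ v, InfOft ρ v ∧ Even (P v) ∧ ∀ w, InfOft ρ w → P w ≤ P v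

/-- The set of source vertices of a set of edges. -/
def srcSet (H : Set (V × V)) : Set V := {u | ∃ w, (u, w) ∈ H}

/-- Group transition fairness (live group) assumption: for every live group `H`,
if some source vertex of `H` occurs infinitely often, then some edge of `H` is
taken infinitely often. -/
def psiGlive (Hc : Set (Set (V × V))) (ρ : ℕ → V) : Prop :=
  ∀ H ∈ Hc, (∃ u ∈ srcSet H, InfOft ρ u) → ∃ e ∈ H, EdgeInfOft ρ e

/-- Rabin objective: some pair `(F, R) ∈ Ω` is such that the play visits `F`
infinitely often and `R` only finitely often. -/
def RabinWin {W : Type u} (Ω : Set (Set W × Set W)) (ρ : ℕ → W) : Prop :=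
  ∃ p ∈ Ω, (∀ n, ∃ k, n ≤ k ∧ ρ k ∈ p.1) ∧ ∃ n, ∀ k, n ≤ k → ρ k ∉ p.2

/-- The Rabin pairs representing the live group conditions:
`Ω1 = {(src(H), H) : H ∈ ℋ}` (edges of `G` viewed as fresh vertices). -/
def Omega1 (Hc : Set (Set (V × V))) : Set (Set (V ⊕ (V × V)) × Set (V ⊕ (V × V))) :=
  {p | ∃ H ∈ Hc, p = (Sum.inl '' srcSet H, Sum.inr '' H)}

/-- The Rabin pairs representing the parity conditions:
`Ω2 = {(P_{2i}, ⋃_{j > 2i} P_j) : 0 ≤ 2i ≤ d}`. -/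
def Omega2 (P : V → ℕ) (d : ℕ) : Set (Set (V ⊕ (V × V)) × Set (V ⊕ (V × V))) :=
  {p | ∃ i : ℕ, 2 * i ≤ d ∧
    p = (Sum.inl '' {v | P v = 2 * i}, Sum.inl '' {v | 2 * i < P v})}

/-- The projection of a play `ρ = v1 v2 v3 …` of `G` to the modified graph `G'`:
`ρ' = v1 (v1,v2) v2 (v2,v3) v3 …`. -/
def projPlay (ρ : ℕ → V) : ℕ → V ⊕ (V × V) :=
  fun n => if n % 2 = 0 then Sum.inl (ρ (n / 2)) else Sum.inr (ρ (n / 2), ρ (n / 2 + 1))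


section Helpers

variable {V : Type u}

lemma pigeon {α : Type*} [Finite α] (f : ℕ → α) (Q : α → Prop)
    (h : ∀ n, ∃ k, n ≤ k ∧ Q (f k)) :
    ∃ a, Q a ∧ ∀ n, ∃ k, n ≤ k ∧ f k = a := by
  by_contra hc
  push_neg at hc
  have hS : {k | Q (f k)}.Infinite := by
    apply Set.infinite_of_not_bddAbove
    rintro ⟨n, hn⟩
    obtain ⟨k, hk, hQ⟩ := h (n + 1)
    have := hn hQ
    omega
  have hfib : ∀ a : α, {k | Q (f k) ∧ f k = a}.Finite := by
    intro a
    by_cases hQa : Q a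
    · obtain ⟨n, hn⟩ := hc a hQa
      apply Set.Finite.subset (Set.finite_Iio n)
      rintro k ⟨hq, hfa⟩
      simp only [Set.mem_Iio]
      by_contra hk
      exact hn k (by omega) hfa
    · apply Set.Finite.subset Set.finite_empty
      rintro k ⟨hq, hfa⟩
      exact absurd (hfa ▸ hq) hQa
  have hfin : (⋃ a ∈ (Set.univ : Set α), {k | Q (f k) ∧ f k = a}).Finite :=
    Set.Finite.biUnion Set.finite_univ (fun a _ => hfib a)
  refine hS (hfin.subset ?_)
  intro k hk
  simp only [Set.mem_iUnion, Set.mem_setOf_eq, Set.mem_univ, exists_prop, true_and]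
  exact ⟨f k, hk, rfl⟩

lemma projPlay_even (ρ : ℕ → V) (k : ℕ) : projPlay ρ (2 * k) = Sum.inl (ρ k) := by
  have h1 : 2 * k % 2 = 0 := by omega
  have h2 : 2 * k / 2 = k := by omega
  simp [projPlay, h1, h2]

lemma projPlay_odd (ρ : ℕ → V) (k : ℕ) :
    projPlay ρ (2 * k + 1) = Sum.inr (ρ k, ρ (k + 1)) := by
  have h1 : ¬ ((2 * k + 1) % 2 = 0) := by omega
  have h2 : (2 * k + 1) / 2 = k := by omega
  simp [projPlay, h1, h2]

lemma mem_inl_image {ρ : ℕ → V} {S : Set V} {k : ℕ}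
    (h : projPlay ρ k ∈ Sum.inl '' S) : k % 2 = 0 ∧ ρ (k / 2) ∈ S := by
  obtain ⟨x, hx, heq⟩ := h
  unfold projPlay at heq
  by_cases hk : k % 2 = 0
  · rw [if_pos hk] at heq
    rw [Sum.inl.injEq] at heq
    exact ⟨hk, heq ▸ hx⟩
  · rw [if_neg hk] at heq
    exact absurd heq (by simp)

lemma mem_inr_image {ρ : ℕ → V} {H : Set (V × V)} {k : ℕ}
    (h : projPlay ρ k ∈ Sum.inr '' H) :
    k % 2 = 1 ∧ (ρ (k / 2), ρ (k / 2 + 1)) ∈ H := by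
  obtain ⟨x, hx, heq⟩ := h
  unfold projPlay at heq
  by_cases hk : k % 2 = 0
  · rw [if_pos hk] at heq
    exact absurd heq (by simp)
  · rw [if_neg hk] at heq
    rw [Sum.inr.injEq] at heq
    exact ⟨by omega, heq ▸ hx⟩

end Helpers

/-- A play `ρ` of `G` is winning for Player 0 in the augmented
parity game `(G, Parity(ℙ), ψ_glive(ℋ))` if and only if its projection `ρ'`
satisfies the Rabin objective `Rabin(Ω1 ∪ Ω2)`. -/
theorem stmt3 (V : Type) [Fintype V] (G : GameGraph V)
    (d : ℕ) (P : V → ℕ) (hP : ∀ v, P v ≤ d)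
    (Hc : Set (Set (V × V))) (hHE : ∀ H ∈ Hc, ∀ e ∈ H, G.E e.1 e.2)
    (ρ : ℕ → V) (hρ : IsPlay G ρ) :
    (psiGlive Hc ρ → ParityWin P ρ) ↔
      RabinWin (Omega1 Hc ∪ Omega2 P d) (projPlay ρ) := by
  constructor
  · intro h
    by_cases hpsi : psiGlive Hc ρ
    · -- parity win: use Omega2
      obtain ⟨v, hvio, hve, hvmax⟩ := h hpsi
      obtain ⟨i, hi⟩ := hve
      have hPv : P v = 2 * i := by omega
      refine ⟨(Sum.inl '' {w | P w = 2 * i}, Sum.inl '' {w | 2 * i < P w}),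
        Or.inr ⟨i, by have := hP v; omega, rfl⟩, ?_, ?_⟩
      · intro n
        obtain ⟨k, hk, hkv⟩ := hvio n
        exact ⟨2 * k, by omega, by rw [projPlay_even]; exact ⟨ρ k, by simp [hkv, hPv], rfl⟩⟩
      · by_contra hcon
        push_neg at hcon
        have : ∀ n, ∃ m, n ≤ m ∧ 2 * i < P (ρ m) := by
          intro n
          obtain ⟨k, hk, hkmem⟩ := hcon (2 * n)
          obtain ⟨hke, hkS⟩ := mem_inl_image hkmem
          exact ⟨k / 2, by omega, hkS⟩
        obtain ⟨w, hw, hwio⟩ := pigeon ρ (fun w => 2 * i < P w) this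
        have := hvmax w hwio
        omega
    · -- psi fails: use Omega1
      rw [psiGlive] at hpsi
      push_neg at hpsi
      obtain ⟨H, hH, ⟨u, hu, huio⟩, hnoe⟩ := hpsi
      refine ⟨(Sum.inl '' srcSet H, Sum.inr '' H), Or.inl ⟨H, hH, rfl⟩, ?_, ?_⟩
      · intro n
        obtain ⟨k, hk, hkv⟩ := huio n
        exact ⟨2 * k, by omega, by rw [projPlay_even]; exact ⟨ρ k, hkv ▸ hu, rfl⟩⟩
      · by_contra hcon
        push_neg at hcon
        have : ∀ n, ∃ m, n ≤ m ∧ (fun j => (ρ j, ρ (j + 1))) m ∈ H := by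
          intro n
          obtain ⟨k, hk, hkmem⟩ := hcon (2 * n)
          obtain ⟨hko, hkH⟩ := mem_inr_image hkmem
          exact ⟨k / 2, by omega, hkH⟩
        obtain ⟨e, heH, heio⟩ := pigeon (fun j => (ρ j, ρ (j + 1))) (· ∈ H) this
        refine hnoe e heH (fun n => ?_)
        obtain ⟨k, hk, hke⟩ := heio n
        exact ⟨k, hk, by rw [← hke], by rw [← hke]⟩
  · rintro ⟨p, hp, hF, n0, hR⟩ hpsi
    rcases hp with ⟨H, hH, rfl⟩ | ⟨i, hid, rfl⟩
    · -- Omega1 pair: contradiction with psi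
      exfalso
      have hsrc : ∃ u ∈ srcSet H, InfOft ρ u := by
        have : ∀ n, ∃ m, n ≤ m ∧ ρ m ∈ srcSet H := by
          intro n
          obtain ⟨k, hk, hkmem⟩ := hF (2 * n)
          obtain ⟨hke, hkS⟩ := mem_inl_image hkmem
          exact ⟨k / 2, by omega, hkS⟩
        obtain ⟨u, hu, huio⟩ := pigeon ρ (· ∈ srcSet H) this
        exact ⟨u, hu, huio⟩
      obtain ⟨e, heH, heio⟩ := hpsi H hH hsrc
      obtain ⟨k, hk, hk1, hk2⟩ := heio n0
      refine hR (2 * k + 1) (by omega) ?_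
      rw [projPlay_odd]
      exact ⟨e, heH, by rw [hk1, hk2]⟩
    · -- Omega2 pair: parity win
      have : ∀ n, ∃ m, n ≤ m ∧ P (ρ m) = 2 * i := by
        intro n
        obtain ⟨k, hk, hkmem⟩ := hF (2 * n)
        obtain ⟨hke, hkS⟩ := mem_inl_image hkmem
        exact ⟨k / 2, by omega, hkS⟩
      obtain ⟨v, hv, hvio⟩ := pigeon ρ (fun w => P w = 2 * i) this
      refine ⟨v, hvio, ⟨i, by omega⟩, ?_⟩
      intro w hwio
      by_contra hlt
      obtain ⟨k, hk, hkw⟩ := hwio n0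
      refine hR (2 * k) (by omega) ?_
      rw [projPlay_even]
      exact ⟨ρ k, by simp [hkw]; omega, rfl⟩
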